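/- arXiv:2605.25523 — 3 statements merged into one kernel-verified Lean document; each statement's English description precedes it below -/
import Mathlib

section
/- Let R be a finite set of reactions with a strict partial order ≺ and a food set F. Suppose that for every reaction r_j and every F-reactant x of r_j not in F, there exists r' ≺ r_j such that x is a net-product of r'. Then for every reaction r_j and every F-reactant x of r_j not in F, there exists a reaction r̄ (with r̄ ≺ r_j) such that x is a net-product of r̄ and x is not an F-reactant of r̄. -/
/-! Follow the chain of earlier producers of `x`: as long as `x` is still an F-reactant of the
current producer, the hypothesis yields an even earlier one. By well-foundedness of `≺` on the
finite set of reactions this descent stops, at a producer of which `x` is not an F-reactant. -/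

theorem WellFounded.exists_rel_and_not_of_forall_exists_rel {α : Type*} {r : α → α → Prop}
    [IsTrans α r] (hwf : WellFounded r) {P Q : α → Prop} (h : ∀ a, P a → ∃ b, r b a ∧ Q b) :
    ∀ a, P a → ∃ b, r b a ∧ Q b ∧ ¬ P b := by
  intro a
  induction a using hwf.induction with
  | _ a ih =>
    intro ha
    obtain ⟨b, hba, hQb⟩ := h a ha
    by_cases hPb : P b
    · obtain ⟨c, hcb, hQc, hPc⟩ := ih b hba hPb
      exact ⟨c, _root_.trans hcb hba, hQc, hPc⟩
    · exact ⟨b, hba, hQb, hPb⟩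

theorem stmt4_general {X R : Type*} [Fintype R] (sm sp σm : X → R → ℝ)
    (F : Set X) (prec : R → R → Prop) (hso : IsStrictOrder R prec)
    (h : ∀ r x, 0 < σm x r → x ∉ F → ∃ r', prec r' r ∧ sm x r' < sp x r') :
    ∀ r x, 0 < σm x r → x ∉ F →
      ∃ rb, prec rb r ∧ sm x rb < sp x rb ∧ ¬ (0 < σm x rb) := by
  intro r x hσ hF
  have := hso
  exact (Finite.wellFounded_of_trans_of_irrefl prec).exists_rel_and_not_of_forall_exists_rel
    (P := fun r => 0 < σm x r) (fun r' hr' => h r' x hr' hF) r hσ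

/-- If every non-food F-reactant of every reaction is a net-product of a
strictly earlier reaction (w.r.t. a strict partial order on a finite reaction
set), then it is in fact a net-product of a strictly earlier reaction of which
it is not an F-reactant. -/
theorem stmt4 {X R : Type*} [Fintype R] (sm sp σm σp k : X → R → ℝ)
    (hσm : ∀ x r, 0 ≤ σm x r) (hσp : ∀ x r, 0 ≤ σp x r) (hk : ∀ x r, 0 ≤ k x r)
    (hm : ∀ x r, σm x r + k x r = sm x r) (hp : ∀ x r, σp x r + k x r = sp x r)
    (F : Set X) (prec : R → R → Prop) (hso : IsStrictOrder R prec)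
    (h : ∀ r x, 0 < σm x r → x ∉ F → ∃ r', prec r' r ∧ sm x r' < sp x r') :
    ∀ r x, 0 < σm x r → x ∉ F →
      ∃ rb, prec rb r ∧ sm x rb < sp x rb ∧ ¬ (0 < σm x rb) :=
  stmt4_general sm sp σm F prec hso h
end

section
/- The stoichiometric matrix of any RAF that is not itself a CAF possesses a square submatrix S* = S[X*, R*] that is well-formed and semipositive, with X* disjoint from the food set; consequently any such RAF is stoichiometrically autocatalytic. -/
/-- A reaction network with an F-decomposition of its stoichiometric
coefficients: reactant coefficients `sm` and product coefficients `sp` are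
decomposed as `sm = σm + k` (F-reactant part plus F-catalyst part) and
`sp = σp + k`, all nonnegative. -/
structure RNet (X R : Type*) where
  sm : X → R → ℝ
  sp : X → R → ℝ
  σm : X → R → ℝ
  σp : X → R → ℝ
  k : X → R → ℝ
  σm_nonneg : ∀ x r, 0 ≤ σm x r
  σp_nonneg : ∀ x r, 0 ≤ σp x r
  k_nonneg : ∀ x r, 0 ≤ k x r
  sm_eq : ∀ x r, σm x r + k x r = sm x r
  sp_eq : ∀ x r, σp x r + k x r = sp x r

namespace RNet

variable {X R : Type*} (N : RNet X R)

/-- `x` is a reactant of `r`. -/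
def reactant (x : X) (r : R) : Prop := 0 < N.sm x r

/-- `x` is a product of `r`. -/
def product (x : X) (r : R) : Prop := 0 < N.sp x r

/-- `x` is an F-reactant of `r`. -/
def Freactant (x : X) (r : R) : Prop := 0 < N.σm x r

/-- `x` is an F-product of `r`. -/
def Fproduct (x : X) (r : R) : Prop := 0 < N.σp x r

/-- `x` is an F-catalyst of `r`. -/
def Fcatalyst (x : X) (r : R) : Prop := 0 < N.k x r

/-- `x` is a net-product of `r`. -/
def netProduct (x : X) (r : R) : Prop := N.sm x r < N.sp x r

/-- The support `X(R')` of a set of reactions: all their reactants and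
products. -/
def support (R' : Set R) : Set X := {x | ∃ r ∈ R', N.reactant x r ∨ N.product x r}

/-- The subnetwork obtained by restricting to species `X'` and reactions `R'`. -/
def sub (X' : Set X) (R' : Set R) : RNet X' R' where
  sm := fun x r => N.sm x r
  sp := fun x r => N.sp x r
  σm := fun x r => N.σm x r
  σp := fun x r => N.σp x r
  k := fun x r => N.k x r
  σm_nonneg := fun x r => N.σm_nonneg x r
  σp_nonneg := fun x r => N.σp_nonneg x r
  k_nonneg := fun x r => N.k_nonneg x r
  sm_eq := fun x r => N.sm_eq x r
  sp_eq := fun x r => N.sp_eq x r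

end RNet

/-- Reflexively Autocatalytic Food-generated set (RAF): every reaction has an
F-catalyst (R1); every non-food F-catalyst is an F-product-but-not-F-reactant
of some reaction (R2); and there is a strict partial order under which every
non-food F-reactant of a reaction is an F-product-but-not-F-reactant of a
strictly earlier reaction (R3). -/
def IsRAF {X R : Type*} (N : RNet X R) (F : Set X) : Prop :=
  (∀ r, ∃ x, N.Fcatalyst x r) ∧
  (∀ r x, N.Fcatalyst x r → x ∉ F →
    ∃ r', N.Fproduct x r' ∧ ¬ N.Freactant x r') ∧
  (∃ prec : R → R → Prop, IsStrictOrder R prec ∧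
    ∀ r x, N.Freactant x r → x ∉ F →
      ∃ r', prec r' r ∧ N.Fproduct x r' ∧ ¬ N.Freactant x r')

/-- Constructively Autocatalytic Food-generated set (CAF): every reaction has an
F-catalyst, and there is a strict partial order under which every non-food
reactant (F-reactant or F-catalyst) of a reaction is an
F-product-but-not-F-reactant of a strictly earlier reaction. -/
def IsCAF {X R : Type*} (N : RNet X R) (F : Set X) : Prop :=
  (∀ r, ∃ x, N.Fcatalyst x r) ∧
  (∃ prec : R → R → Prop, IsStrictOrder R prec ∧
    ∀ r x, (N.Freactant x r ∨ N.Fcatalyst x r) → x ∉ F →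
      ∃ r', prec r' r ∧ N.Fproduct x r' ∧ ¬ N.Freactant x r')

/-!
Call a species generable if it can be built from the food set by reactions whose F-reactants
and F-catalysts have all been built already. If every species needed by a reaction were
generable, ranking reactions by the stage at which their needs become available would make the
RAF a CAF; so some needed species is not generable. Such a species is not food, hence (by the RAF
axioms) has a producer, chosen of minimal rank in the RAF order, and that producer in turn needs
a non-generable species. In a finite network this step ends in a cycle, whose species and
producers give a square well-formed submatrix. Weighting reaction `r` by `ε ^ rank r` makes it
semipositive for small `ε`: the producer of each species of the cycle comes strictly before
every reaction consuming that species.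
-/

open Finset Filter Set Function Topology

theorem exists_nat_rank_of_isStrictOrder {α : Type*} [Fintype α] (r : α → α → Prop)
    [IsStrictOrder α r] : ∃ ρ : α → ℕ, ∀ a b, r a b → ρ a < ρ b := by
  classical
  refine ⟨fun b => #{a | r a b}, fun a b hab => Finset.card_lt_card ?_⟩
  refine (Finset.ssubset_iff_of_subset fun c hc => ?_).2 ⟨a, ?_, ?_⟩
  · simp only [Finset.mem_filter, Finset.mem_univ, true_and] at hc ⊢
    exact _root_.trans hc hab
  · simpa using hab
  · simpa using irrefl a

theorem Function.exists_iterate_mem_periodicPts {α : Type*} [Finite α] (f : α → α) (x : α) :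
    ∃ n, f^[n] x ∈ periodicPts f := by
  obtain ⟨m, n, hne, heq⟩ := Finite.exists_ne_map_eq_of_infinite (f^[·] x)
  have key : ∀ {m n}, m < n → f^[m] x = f^[n] x → f^[m] x ∈ periodicPts f := fun hlt heq =>
    mk_mem_periodicPts (Nat.sub_pos_of_lt hlt) <| by
      rw [IsPeriodicPt, IsFixedPt, ← iterate_add_apply, Nat.sub_add_cancel hlt.le, ← heq]
  rcases lt_or_gt_of_ne hne with hlt | hlt
  · exact ⟨m, key hlt heq⟩
  · exact ⟨n, key hlt heq.symm⟩

theorem Function.exists_finset_mapsTo_injOn {α : Type*} [Finite α] {f : α → α} {s : Set α}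
    (hf : MapsTo f s s) (hs : s.Nonempty) :
    ∃ t : Finset α, t.Nonempty ∧ ↑t ⊆ s ∧ MapsTo f t t ∧ InjOn f t := by
  obtain ⟨x, hx⟩ := hs
  obtain ⟨n, hn⟩ := exists_iterate_mem_periodicPts f x
  have hfin := (s ∩ periodicPts f).toFinite
  refine ⟨hfin.toFinset, ⟨f^[n] x, by simpa using ⟨hf.iterate n hx, hn⟩⟩, ?_, ?_, ?_⟩ <;>
    rw [Set.Finite.coe_toFinset]
  · exact inter_subset_left
  · exact hf.inter_inter (bijOn_periodicPts f).mapsTo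
  · exact (bijOn_periodicPts f).injOn.mono inter_subset_right

theorem exists_pos_weight_sum_sub_mul_pos {ι κ : Type*} (s : Finset ι) (t : Finset κ)
    (p q : ι → κ → ℝ) (hp : ∀ i ∈ s, ∀ j ∈ t, 0 ≤ p i j) (hq : ∀ i ∈ s, ∀ j ∈ t, 0 ≤ q i j)
    (ρ : κ → ℕ) (c : ι → κ) (hct : ∀ i ∈ s, c i ∈ t) (hpc : ∀ i ∈ s, 0 < p i (c i))
    (hρ : ∀ i ∈ s, ∀ j ∈ t, 0 < q i j → ρ (c i) < ρ j) :
    ∃ v : κ → ℝ, (∀ j, 0 < v j) ∧ ∀ i ∈ s, 0 < ∑ j ∈ t, (p i j - q i j) * v j := by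
  obtain ⟨ε, ⟨hε1, hsmall⟩, hε0⟩ : ∃ ε : ℝ, (ε ≤ 1 ∧ ∀ i ∈ s, ε * ∑ j ∈ t, q i j < p i (c i))
      ∧ 0 < ε := by
    refine ((Filter.Eventually.and ?_ ?_).filter_mono nhdsWithin_le_nhds |>.and
      self_mem_nhdsWithin).exists (f := 𝓝[>] (0 : ℝ))
    · exact eventually_le_nhds zero_lt_one
    · refine (eventually_all_finset s).2 fun i hi => ?_
      exact (tendsto_id.mul_const _).eventually_lt tendsto_const_nhds (by simpa using hpc i hi)
  refine ⟨fun j => ε ^ ρ j, fun j => pow_pos hε0 _, fun i hi => ?_⟩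
  have hlater : ∀ j ∈ t, q i j * ε ^ ρ j ≤ q i j * ε ^ (ρ (c i) + 1) := fun j hj => by
    rcases (hq i hi j hj).eq_or_lt with h | h
    · simp [← h]
    · exact mul_le_mul_of_nonneg_left
        (pow_le_pow_of_le_one hε0.le hε1 (hρ i hi j hj h)) h.le
  calc 0 < ε ^ ρ (c i) * (p i (c i) - ε * ∑ j ∈ t, q i j) :=
        mul_pos (pow_pos hε0 _) (sub_pos.2 (hsmall i hi))
    _ = p i (c i) * ε ^ ρ (c i) - ∑ j ∈ t, q i j * ε ^ (ρ (c i) + 1) := by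
        rw [← Finset.sum_mul]; ring
    _ ≤ ∑ j ∈ t, p i j * ε ^ ρ j - ∑ j ∈ t, q i j * ε ^ ρ j :=
        sub_le_sub (Finset.single_le_sum (fun j hj => mul_nonneg (hp i hi j hj)
          (pow_nonneg hε0.le _)) (hct i hi)) (Finset.sum_le_sum hlater)
    _ = ∑ j ∈ t, (p i j - q i j) * ε ^ ρ j := by
        simp only [sub_mul, Finset.sum_sub_distrib]

namespace RNet

variable {X R : Type*} (N : RNet X R)

def Needs (x : X) (r : R) : Prop := N.Freactant x r ∨ N.Fcatalyst x r

def Produces (x : X) (r : R) : Prop := N.Fproduct x r ∧ ¬ N.Freactant x r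

variable {N}

theorem Needs.reactant {x : X} {r : R} (h : N.Needs x r) : N.reactant x r := by
  show 0 < N.sm x r
  rw [← N.sm_eq]
  rcases h with h | h
  · exact add_pos_of_pos_of_nonneg h (N.k_nonneg x r)
  · exact add_pos_of_nonneg_of_pos (N.σm_nonneg x r) h

theorem Fproduct.product {x : X} {r : R} (h : N.Fproduct x r) : N.product x r := by
  show 0 < N.sp x r
  rw [← N.sp_eq]
  exact add_pos_of_pos_of_nonneg h (N.k_nonneg x r)

variable (N)

theorem sp_sub_sm (x : X) (r : R) : N.sp x r - N.sm x r = N.σp x r - N.σm x r := by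
  rw [← N.sp_eq, ← N.sm_eq]
  ring

variable (F : Set X)

def GenerableIn : ℕ → X → Prop
  | 0, x => x ∈ F
  | n + 1, x => GenerableIn n x ∨ ∃ r, N.Produces x r ∧ ∀ y, N.Needs y r → GenerableIn n y

def Generable (x : X) : Prop := ∃ n, N.GenerableIn F n x

variable {N F}

theorem generableIn_mono {m n : ℕ} (h : m ≤ n) {x : X} (hx : N.GenerableIn F m x) :
    N.GenerableIn F n x := by
  induction h with
  | refl => exact hx
  | step _ ih => exact Or.inl ih

theorem generable_of_mem {x : X} (hx : x ∈ F) : N.Generable F x := ⟨0, hx⟩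

theorem exists_generableIn_of_forall [Finite X] {p : X → Prop}
    (h : ∀ y, p y → N.Generable F y) : ∃ n, ∀ y, p y → N.GenerableIn F n y := by
  refine (eventually_all.2 fun y => eventually_imp_distrib_left.2 fun hy => ?_).exists
    (f := atTop)
  obtain ⟨n, hn⟩ := h y hy
  exact eventually_atTop.2 ⟨n, fun m hm => generableIn_mono hm hn⟩

theorem generable_of_produces [Finite X] {x : X} {r : R} (hr : N.Produces x r)
    (h : ∀ y, N.Needs y r → N.Generable F y) : N.Generable F x :=
  let ⟨n, hn⟩ := exists_generableIn_of_forall h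
  ⟨n + 1, Or.inr ⟨r, hr, hn⟩⟩

/-- The CAF order ranks a reaction by the first stage at which all its needs are available. -/
theorem isCAF_of_forall_needs_generable [Finite X] (hcat : ∀ r, ∃ x, N.Fcatalyst x r)
    (h : ∀ x r, N.Needs x r → N.Generable F x) : IsCAF N F := by
  classical
  have hstage (r : R) : ∃ n, ∀ y, N.Needs y r → N.GenerableIn F n y :=
    exists_generableIn_of_forall (h · r)
  let ρ (r : R) : ℕ := Nat.find (hstage r)
  refine ⟨hcat, (ρ · < ρ ·), { irrefl := fun _ => lt_irrefl _, trans := fun _ _ _ => lt_trans },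
    fun r x hx hxF => ?_⟩
  have hx' : ∃ n, N.GenerableIn F n x := ⟨ρ r, Nat.find_spec (hstage r) x hx⟩
  obtain ⟨m, hm⟩ : ∃ m, Nat.find hx' = m + 1 :=
    Nat.exists_eq_succ_of_ne_zero fun h0 => hxF <| by
      simpa only [h0, GenerableIn] using Nat.find_spec hx'
  have hfirst := Nat.find_spec hx'
  rw [hm] at hfirst
  rcases hfirst with hprev | ⟨q, hq, hneeds⟩
  · exact absurd hprev (Nat.find_min hx' (by omega))
  · have hq_le : ρ q ≤ m := Nat.find_min' _ hneeds
    have hx_le : Nat.find hx' ≤ ρ r := Nat.find_min' _ (Nat.find_spec (hstage r) x hx)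
    exact ⟨q, by omega, hq⟩

theorem exists_produces_rank_lt [Finite R] {prec : R → R → Prop} {ρ : R → ℕ}
    (hρ : ∀ a b, prec a b → ρ a < ρ b)
    (hcat : ∀ r x, N.Fcatalyst x r → x ∉ F → ∃ r', N.Fproduct x r' ∧ ¬ N.Freactant x r')
    (hreac : ∀ r x, N.Freactant x r → x ∉ F →
      ∃ r', prec r' r ∧ N.Fproduct x r' ∧ ¬ N.Freactant x r')
    {x : X} {r : R} (hx : N.Needs x r) (hxF : x ∉ F) :
    ∃ q, N.Produces x q ∧ ∀ r', N.Freactant x r' → ρ q < ρ r' := by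
  obtain ⟨q₀, hq₀⟩ : ∃ q, N.Produces x q := by
    rcases hx with hx | hx
    · obtain ⟨q, -, hq⟩ := hreac r x hx hxF
      exact ⟨q, hq⟩
    · exact hcat r x hx hxF
  obtain ⟨q, hq, hmin⟩ := Set.exists_min_image {q | N.Produces x q} ρ (Set.toFinite _) ⟨q₀, hq₀⟩
  refine ⟨q, hq, fun r' hr' => ?_⟩
  obtain ⟨q', hprec, hq'⟩ := hreac r' x hr' hxF
  exact (hmin q' hq').trans_lt (hρ q' r' hprec)

end RNet

open RNet in
theorem IsRAF.exists_needs_cycle {X R : Type*} [Finite X] [Fintype R] {N : RNet X R}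
    {F : Set X} (hRAF : IsRAF N F) (hnCAF : ¬ IsCAF N F) :
    ∃ (ρ : R → ℕ) (Xs : Finset X) (P : X → R), Xs.Nonempty ∧ InjOn P Xs ∧
      ∀ x ∈ Xs, x ∉ F ∧ N.Produces x (P x) ∧ (∃ y ∈ Xs, N.Needs y (P x)) ∧
        ∀ r, N.Freactant x r → ρ (P x) < ρ r := by
  obtain ⟨hcat, hcat_prod, prec, hprec, hreac_prod⟩ := hRAF
  obtain ⟨ρ, hρ⟩ := exists_nat_rank_of_isStrictOrder prec
  obtain ⟨z₀, r₀, hz₀, hz₀gen⟩ : ∃ z r, N.Needs z r ∧ ¬ N.Generable F z := by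
    by_contra! h
    exact hnCAF (isCAF_of_forall_needs_generable hcat h)
  let bad : Set X := {z | ¬ N.Generable F z ∧ ∃ r, N.Needs z r}
  have hbadF : ∀ z ∈ bad, z ∉ F := fun z hz hzF => hz.1 (generable_of_mem hzF)
  have : Nonempty X := ⟨z₀⟩
  have : Nonempty R := ⟨r₀⟩
  choose! P hP hPrank using fun z (hz : z ∈ bad) =>
    exists_produces_rank_lt hρ hcat_prod hreac_prod hz.2.choose_spec (hbadF z hz)
  choose! need hneed using fun (q : R) (h : ∃ y, N.Needs y q ∧ ¬ N.Generable F y) => h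
  have hstep (z : X) (hz : z ∈ bad) : N.Needs (need (P z)) (P z) ∧ ¬ N.Generable F (need (P z)) :=
    hneed _ <| by
      by_contra! h
      exact hz.1 (generable_of_produces (hP z hz) h)
  obtain ⟨Xs, hne, hbad, hmaps, hinj⟩ := exists_finset_mapsTo_injOn (f := need ∘ P) (s := bad)
    (fun z hz => ⟨(hstep z hz).2, P z, (hstep z hz).1⟩) ⟨z₀, hz₀gen, r₀, hz₀⟩
  exact ⟨ρ, Xs, P, hne, hinj.of_comp, fun x hx =>
    ⟨hbadF x (hbad hx), hP x (hbad hx), ⟨_, hmaps hx, (hstep x (hbad hx)).1⟩, hPrank x (hbad hx)⟩⟩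

/-- Main theorem: the stoichiometric matrix of a RAF that is not itself a CAF
possesses a square, well-formed, semipositive submatrix `S[X*, R*]` with `X*`
disjoint from the food set; hence such a RAF is stoichiometrically
autocatalytic. -/
theorem stmt10 {X R : Type*} [Fintype X] [Fintype R] (N : RNet X R) (F : Set X)
    (hRAF : IsRAF N F) (hnCAF : ¬ IsCAF N F) :
    ∃ (Xs : Finset X) (Rs : Finset R),
      Xs.Nonempty ∧ Xs.card = Rs.card ∧
      (∀ x ∈ Xs, x ∉ F) ∧
      (∀ r ∈ Rs, (∃ m ∈ Xs, N.reactant m r) ∧ ∃ n ∈ Xs, N.product n r) ∧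
      ∃ v : R → ℝ, (∀ r ∈ Rs, 0 < v r) ∧
        ∀ m ∈ Xs, 0 < ∑ r ∈ Rs, (N.sp m r - N.sm m r) * v r := by
  classical
  obtain ⟨ρ, Xs, P, hne, hinj, hXs⟩ := hRAF.exists_needs_cycle hnCAF
  obtain ⟨v, hv, hsum⟩ := exists_pos_weight_sum_sub_mul_pos Xs (Xs.image P) N.σp N.σm
    (fun _ _ _ _ => N.σp_nonneg _ _) (fun _ _ _ _ => N.σm_nonneg _ _) ρ P
    (fun x hx => mem_image_of_mem P hx) (fun x hx => (hXs x hx).2.1.1)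
    (fun x hx r _ hr => (hXs x hx).2.2.2 r hr)
  refine ⟨Xs, Xs.image P, hne, (card_image_of_injOn hinj).symm, fun x hx => (hXs x hx).1, ?_,
    v, fun r _ => hv r, fun m hm => ?_⟩
  · simp only [Finset.forall_mem_image]
    intro x hx
    obtain ⟨-, hprod, ⟨y, hy, hneeds⟩, -⟩ := hXs x hx
    exact ⟨⟨y, hy, hneeds.reactant⟩, x, hx, hprod.1.product⟩
  · simpa only [N.sp_sub_sm] using hsum m hm
end

section
/- In a RAF with food set F in which every reaction has a reactant outside F, define ψ(x), for each non-food species x that is a reactant of some reaction, to be a reaction minimal with respect to the generation order ≺ among reactions having x as a net-product. Then x is not an F-reactant of ψ(x). -/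
/-- In a RAF (generation order `prec`, stated in net-product form) in which
every reaction has a reactant outside the food set, if `ψ x` is chosen
`prec`-minimal among reactions having the non-food reactant `x` as a
net-product, then `x` is not an F-reactant of `ψ x`. -/
theorem stmt12 {X R : Type*} (N : RNet X R) (F : Set X)
    (prec : R → R → Prop) (hstrict : IsStrictOrder R prec)
    (hcat : ∀ r, ∃ x, N.Fcatalyst x r)
    (hR3 : ∀ r x, N.Freactant x r → x ∉ F →
      ∃ r', prec r' r ∧ N.netProduct x r')
    (hreact : ∀ r, ∃ x, N.reactant x r ∧ x ∉ F)
    (ψ : X → R)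
    (hψ : ∀ x, x ∉ F → (∃ r, N.reactant x r) →
      N.netProduct x (ψ x) ∧ ∀ r', N.netProduct x r' → ¬ prec r' (ψ x)) :
    ∀ x, x ∉ F → (∃ r, N.reactant x r) → ¬ N.Freactant x (ψ x) := by
  intro x hxF hxr hFr
  obtain ⟨hnet, hmin⟩ := hψ x hxF hxr
  obtain ⟨r', hprec, hnet'⟩ := hR3 (ψ x) x hFr hxF
  exact hmin r' hnet' hprec
end
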